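/- arXiv:2512.04789 — 6 statements merged into one kernel-verified Lean document; each statement's English description precedes it below -/
import Mathlib

section
/- Let φ be an alternating m-form on ℝ^n and let g₁, g₂ be two inner products (positive definite symmetric bilinear forms) on ℝ^n. If φ has comass at most 1 with respect to g₁ and with respect to g₂, then for every s ∈ [0,1] the bilinear form g(s) = (1−s)·g₁ + s·g₂ is again an inner product and φ has comass at most 1 with respect to g(s); that is, φ(v₁,…,v_m)² ≤ Gram_{g(s)}(v₁,…,v_m) for all v₁,…,v_m ∈ ℝ^n. -/
/-- The Gram determinant of the vectors `v 0, …, v (m-1)` with respect to a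
(bilinear) pairing `g` on `ℝ^n`: the determinant of the `m × m` matrix with
entries `g (v i) (v j)`. -/
noncomputable def gram {n m : ℕ} (g : (Fin n → ℝ) → (Fin n → ℝ) → ℝ)
    (v : Fin m → (Fin n → ℝ)) : ℝ :=
  (Matrix.of fun i j => g (v i) (v j)).det

/-- `g` is an inner product on `ℝ^n`: a symmetric bilinear form which is
positive definite. -/
def IsInnerProduct {n : ℕ} (g : (Fin n → ℝ) → (Fin n → ℝ) → ℝ) : Prop :=
  (∀ x y, g x y = g y x) ∧ (∀ x, IsLinearMap ℝ (g x)) ∧ ∀ v, v ≠ 0 → 0 < g v v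

/-!
For linearly independent `v₁, …, v_m` the Gram matrices `G₁, G₂` of `g₁, g₂` are positive
definite, and the Gram matrix of `g(s)` is `(1 - s) G₁ + s G₂`. The determinant is log-concave on
positive definite matrices: writing `G₁ = S²` and `G₂ = S C S`, this reduces to
`det C ^ s ≤ det ((1 - s) + s C)`, which is the weighted AM-GM inequality applied to each
eigenvalue of `C`. Hence `φ(v)² ≤ det G₁ ^ (1 - s) * det G₂ ^ s ≤ det ((1 - s) G₁ + s G₂)`.
If the `vᵢ` are dependent, `φ(v) = 0` and the Gram determinant is nonnegative.
-/

lemma le_rpow_one_sub_mul_rpow {a b c s : ℝ} (hc : 0 ≤ c) (hca : c ≤ a) (hcb : c ≤ b)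
    (hs0 : 0 ≤ s) (hs1 : s ≤ 1) : c ≤ a ^ (1 - s) * b ^ s :=
  calc c = c ^ (1 - s) * c ^ s := by
        rw [← Real.rpow_add' hc (by norm_num), sub_add_cancel, Real.rpow_one]
    _ ≤ a ^ (1 - s) * b ^ s := by gcongr; exact Real.rpow_nonneg (hc.trans hca) _

namespace Matrix

open scoped MatrixOrder

variable {ι : Type*} [Fintype ι] [DecidableEq ι]

lemma IsHermitian.det_cfc {A : Matrix ι ι ℝ} (hA : A.IsHermitian) (f : ℝ → ℝ) :
    (cfc f A).det = ∏ i, f (hA.eigenvalues i) := by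
  rw [hA.cfc_eq]
  simp [IsHermitian.cfc, -Unitary.conjStarAlgAut_apply]

lemma IsHermitian.one_sub_smul_one_add_smul_eq_cfc {C : Matrix ι ι ℝ} (hC : C.IsHermitian)
    (s : ℝ) : (1 - s) • (1 : Matrix ι ι ℝ) + s • C = cfc (fun x => (1 - s) + s * x) C := by
  rw [cfc_const_add (1 - s) (s * ·) C (by fun_prop) hC.isSelfAdjoint,
    cfc_const_mul_id s C hC.isSelfAdjoint, Algebra.algebraMap_eq_smul_one]

lemma PosDef.det_rpow_le_det_one_sub_smul_one_add_smul {C : Matrix ι ι ℝ} (hC : C.PosDef)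
    {s : ℝ} (hs0 : 0 ≤ s) (hs1 : s ≤ 1) :
    C.det ^ s ≤ ((1 - s) • (1 : Matrix ι ι ℝ) + s • C).det := by
  have hpos := hC.eigenvalues_pos
  rw [hC.isHermitian.one_sub_smul_one_add_smul_eq_cfc, hC.isHermitian.det_cfc,
    hC.isHermitian.det_eq_prod_eigenvalues]
  simp only [RCLike.ofReal_real_eq_id, id]
  rw [← Real.finsetProd_rpow _ _ fun i _ => (hpos i).le]
  refine Finset.prod_le_prod (fun i _ => Real.rpow_nonneg (hpos i).le s) fun i _ => ?_
  simpa using Real.geom_mean_le_arith_mean2_weighted (sub_nonneg.mpr hs1) hs0 zero_le_one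
    (hpos i).le (sub_add_cancel 1 s)

lemma PosDef.det_rpow_mul_det_rpow_le {A B : Matrix ι ι ℝ} (hA : A.PosDef) (hB : B.PosDef)
    {s : ℝ} (hs0 : 0 ≤ s) (hs1 : s ≤ 1) :
    A.det ^ (1 - s) * B.det ^ s ≤ ((1 - s) • A + s • B).det := by
  set S := CFC.sqrt A
  have hS : S.IsHermitian := (nonneg_iff_posSemidef.mp (CFC.sqrt_nonneg A)).isHermitian
  have hSS : S * S = A := CFC.sqrt_mul_sqrt_self A hA.posSemidef.nonneg
  have hdet_conj (M : Matrix ι ι ℝ) : (S * M * S).det = A.det * M.det := by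
    rw [← hSS, det_mul, det_mul, det_mul]; ring
  have hSunit : IsUnit S.det :=
    isUnit_iff_ne_zero.mpr fun h => hA.det_pos.ne' (by simpa [h] using (hdet_conj 1).symm)
  set C := S⁻¹ * B * S⁻¹
  have hC : C.PosDef := by
    have := hB.conjTranspose_mul_mul_same (mulVec_injective_iff_isUnit.mpr
        (isUnit_nonsing_inv_iff.mpr ((isUnit_iff_isUnit_det S).mpr hSunit)))
    rwa [hS.inv.eq] at this
  have hBC : B = S * C * S := by
    simp only [C, ← Matrix.mul_assoc, mul_nonsing_inv _ hSunit, one_mul]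
    rw [Matrix.mul_assoc, nonsing_inv_mul _ hSunit, mul_one]
  have hmix : (1 - s) • A + s • B = S * ((1 - s) • 1 + s • C) * S := by
    rw [hBC, ← hSS]
    simp only [Matrix.mul_add, Matrix.add_mul, Matrix.mul_smul, Matrix.smul_mul, Matrix.mul_one]
  have hA0 := hA.det_pos
  calc A.det ^ (1 - s) * B.det ^ s = A.det * C.det ^ s := by
        rw [hBC, hdet_conj, Real.mul_rpow hA0.le hC.det_pos.le, ← mul_assoc,
          ← Real.rpow_add hA0, sub_add_cancel, Real.rpow_one]
    _ ≤ A.det * ((1 - s) • 1 + s • C).det := by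
        gcongr; exact hC.det_rpow_le_det_one_sub_smul_one_add_smul hs0 hs1
    _ = ((1 - s) • A + s • B).det := by rw [hmix, hdet_conj]

end Matrix

open scoped Matrix

section Gram

variable {n m : ℕ}

def gramMatrix (g : (Fin n → ℝ) → (Fin n → ℝ) → ℝ) (v : Fin m → (Fin n → ℝ)) :
    Matrix (Fin m) (Fin m) ℝ :=
  Matrix.of fun i j => g (v i) (v j)

lemma gram_eq_det_gramMatrix (g : (Fin n → ℝ) → (Fin n → ℝ) → ℝ) (v : Fin m → (Fin n → ℝ)) :
    gram g v = (gramMatrix g v).det :=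
  rfl

lemma gramMatrix_smul_add_smul (g₁ g₂ : (Fin n → ℝ) → (Fin n → ℝ) → ℝ) (a b : ℝ)
    (v : Fin m → (Fin n → ℝ)) :
    gramMatrix (fun x y => a * g₁ x y + b * g₂ x y) v =
      a • gramMatrix g₁ v + b • gramMatrix g₂ v := by
  ext i j
  simp [gramMatrix]

end Gram

namespace IsInnerProduct

variable {n : ℕ} {g g₁ g₂ : (Fin n → ℝ) → (Fin n → ℝ) → ℝ}

def toBilinForm (hg : IsInnerProduct g) : LinearMap.BilinForm ℝ (Fin n → ℝ) :=
  LinearMap.mk₂ ℝ g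
    (fun x y z => by rw [hg.1, (hg.2.1 z).map_add, hg.1 z, hg.1 z])
    (fun c x y => by rw [hg.1, (hg.2.1 y).map_smul, hg.1])
    (fun x y z => (hg.2.1 x).map_add y z)
    (fun c x y => (hg.2.1 x).map_smul c y)

lemma toBilinForm_apply (hg : IsInnerProduct g) (x y : Fin n → ℝ) : hg.toBilinForm x y = g x y :=
  rfl

lemma self_nonneg (hg : IsInnerProduct g) (x : Fin n → ℝ) : 0 ≤ g x x := by
  rcases eq_or_ne x 0 with rfl | hx
  · simp [← hg.toBilinForm_apply]
  · exact (hg.2.2 x hx).le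

lemma smul_add_smul (hg₁ : IsInnerProduct g₁) (hg₂ : IsInnerProduct g₂) {a b : ℝ} (ha : 0 ≤ a)
    (hb : 0 ≤ b) (hab : 0 < a + b) : IsInnerProduct (fun x y => a * g₁ x y + b * g₂ x y) := by
  refine ⟨fun x y => by dsimp only; rw [hg₁.1, hg₂.1], fun x => ?_, fun x hx => ?_⟩
  · exact ((a • hg₁.toBilinForm + b • hg₂.toBilinForm) x).isLinear
  · have h₁ := hg₁.2.2 x hx
    have h₂ := hg₂.2.2 x hx
    rcases ha.eq_or_lt with rfl | ha
    · simp only [zero_add] at hab ⊢; positivity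
    · positivity

variable {m : ℕ}

lemma dotProduct_gramMatrix_mulVec (hg : IsInnerProduct g) (v : Fin m → (Fin n → ℝ))
    (x : Fin m → ℝ) :
    star x ⬝ᵥ (gramMatrix g v *ᵥ x) = g (∑ i, x i • v i) (∑ i, x i • v i) := by
  simp only [dotProduct, Pi.star_apply, star_trivial, Matrix.mulVec, gramMatrix,
    ← hg.toBilinForm_apply, Matrix.of_apply, Finset.mul_sum, map_sum, map_smul,
    LinearMap.coe_sum, LinearMap.coe_smul, Finset.sum_apply, Pi.smul_apply, smul_eq_mul]
  rw [Finset.sum_comm]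
  exact Finset.sum_congr rfl fun j _ => Finset.sum_congr rfl fun i _ => by ring

lemma isHermitian_gramMatrix (hg : IsInnerProduct g) (v : Fin m → (Fin n → ℝ)) :
    (gramMatrix g v).IsHermitian := by
  ext i j
  simp [gramMatrix, hg.1 (v i)]

lemma posSemidef_gramMatrix (hg : IsInnerProduct g) (v : Fin m → (Fin n → ℝ)) :
    (gramMatrix g v).PosSemidef :=
  .of_dotProduct_mulVec_nonneg (hg.isHermitian_gramMatrix v) fun x => by
    rw [hg.dotProduct_gramMatrix_mulVec]; exact hg.self_nonneg _

lemma posDef_gramMatrix (hg : IsInnerProduct g) {v : Fin m → (Fin n → ℝ)}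
    (hv : LinearIndependent ℝ v) : (gramMatrix g v).PosDef :=
  .of_dotProduct_mulVec_pos (hg.isHermitian_gramMatrix v) fun x hx => by
    rw [hg.dotProduct_gramMatrix_mulVec]
    exact hg.2.2 _ fun h => hx (funext (Fintype.linearIndependent_iff.mp hv x h))

end IsInnerProduct

/-- If an alternating `m`-form `φ` on `ℝ^n` has comass at most `1` with respect
to two inner products `g₁` and `g₂`, then for every `s ∈ [0,1]` the convex
combination `(1-s)•g₁ + s•g₂` is again an inner product and `φ` has comass at
most `1` with respect to it. -/
theorem stmt0 {n m : ℕ} (φ : (Fin n → ℝ) [⋀^Fin m]→ₗ[ℝ] ℝ)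
    (g₁ g₂ : (Fin n → ℝ) → (Fin n → ℝ) → ℝ)
    (hg₁ : IsInnerProduct g₁) (hg₂ : IsInnerProduct g₂)
    (hc₁ : ∀ v : Fin m → (Fin n → ℝ), (φ v) ^ 2 ≤ gram g₁ v)
    (hc₂ : ∀ v : Fin m → (Fin n → ℝ), (φ v) ^ 2 ≤ gram g₂ v)
    (s : ℝ) (hs : s ∈ Set.Icc (0 : ℝ) 1) :
    IsInnerProduct (fun x y => (1 - s) * g₁ x y + s * g₂ x y) ∧
      ∀ v : Fin m → (Fin n → ℝ),
        (φ v) ^ 2 ≤ gram (fun x y => (1 - s) * g₁ x y + s * g₂ x y) v := by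
  obtain ⟨hs0, hs1⟩ := hs
  have hg : IsInnerProduct (fun x y => (1 - s) * g₁ x y + s * g₂ x y) :=
    hg₁.smul_add_smul hg₂ (sub_nonneg.mpr hs1) hs0 (by norm_num)
  refine ⟨hg, fun v => ?_⟩
  by_cases hv : LinearIndependent ℝ v
  · calc φ v ^ 2 ≤ gram g₁ v ^ (1 - s) * gram g₂ v ^ s :=
          le_rpow_one_sub_mul_rpow (sq_nonneg _) (hc₁ v) (hc₂ v) hs0 hs1
      _ ≤ gram (fun x y => (1 - s) * g₁ x y + s * g₂ x y) v := by
          simp only [gram_eq_det_gramMatrix, gramMatrix_smul_add_smul]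
          exact (hg₁.posDef_gramMatrix hv).det_rpow_mul_det_rpow_le (hg₂.posDef_gramMatrix hv)
            hs0 hs1
  · rw [φ.map_linearDependent v hv, gram_eq_det_gramMatrix]
    simpa using (hg.posSemidef_gramMatrix v).det_nonneg
end

section
/- Let 1 ≤ m ≤ n, let φ be an alternating m-form on ℝ^n, and let v₁,…,v_m ∈ ℝ^n be linearly independent vectors with φ(v₁,…,v_m) = 1. Set V = span{v₁,…,v_m}. Then there exists a unique linear subspace W ⊆ ℝ^n that is complementary to V (i.e., V ∩ W = {0} and V + W = ℝ^n) and satisfies: for every i ∈ {1,…,m} and every w ∈ W, φ(v₁,…,v_{i−1}, w, v_{i+1},…,v_m) = 0. -/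
/-!
The slot functionals `fᵢ x = φ(v₁,…,x,…,v_m)` (with `x` in slot `i`) satisfy `fᵢ(vⱼ) = δᵢⱼ`:
for `i = j` this is `φ v = 1`, and for `i ≠ j` the argument repeats `vⱼ`, so the alternating
form vanishes. Hence `c ↦ ∑ cⱼ vⱼ` is a section of `f = (fᵢ)ᵢ`, so `span v` and `ker f` are
complementary. Any complement `W` on which all `fᵢ` vanish lies in `ker f`, and two comparable
complements of the same subspace coincide (modularity).
-/

open Submodule

namespace LinearMap

variable {R M N : Type*} [Ring R] [AddCommGroup M] [Module R M] [AddCommGroup N] [Module R N]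

theorem isCompl_range_ker_of_comp_eq_id {s : N →ₗ[R] M} {g : M →ₗ[R] N} (h : g ∘ₗ s = id) :
    IsCompl (range s) (ker g) := by
  have hg : range g = ⊤ := range_eq_top.2 fun y => ⟨s y, congr($h y)⟩
  have hs : ker s = ⊥ := ker_eq_bot_of_inverse h
  have hidem : IsIdempotentElem (s ∘ₗ g) := by
    rw [IsIdempotentElem, Module.End.mul_eq_comp, comp_assoc, ← comp_assoc g, h, id_comp]
  simpa only [range_comp_of_range_eq_top _ hg, ker_comp_of_ker_eq_bot _ hs] using
    IsIdempotentElem.isCompl hidem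

end LinearMap

section Biorthogonal

variable {R M ι : Type*} [Ring R] [AddCommGroup M] [Module R M] [Fintype ι] [DecidableEq ι]
  {f : ι → M →ₗ[R] R} {v : ι → M}

theorem isCompl_span_ker_pi_of_biorthogonal (h : ∀ i j, f i (v j) = if i = j then 1 else 0) :
    IsCompl (span R (Set.range v)) (LinearMap.ker (LinearMap.pi f)) := by
  rw [← Fintype.range_linearCombination]
  refine LinearMap.isCompl_range_ker_of_comp_eq_id (LinearMap.pi_ext' fun j => ?_)
  ext x
  simp [Fintype.linearCombination_apply_single, h, Pi.single_apply]

theorem existsUnique_isCompl_span_forall_eq_zero_of_biorthogonal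
    (h : ∀ i j, f i (v j) = if i = j then 1 else 0) :
    ∃! W : Submodule R M, IsCompl (span R (Set.range v)) W ∧ ∀ i, ∀ w ∈ W, f i w = 0 := by
  have hK := isCompl_span_ker_pi_of_biorthogonal h
  refine ⟨_, ⟨hK, fun i w hw => congr_fun (LinearMap.mem_ker.1 hw) i⟩, ?_⟩
  rintro W ⟨hW, hfW⟩
  have hle : W ≤ LinearMap.ker (LinearMap.pi f) := fun w hw =>
    LinearMap.mem_ker.2 (funext fun i => hfW i w hw)
  exact eq_of_le_of_inf_le_of_sup_le (z := span R (Set.range v)) hle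
    (hK.symm.inf_eq_bot.trans_le bot_le) (le_top.trans_eq hW.symm.sup_eq_top.symm)

end Biorthogonal

theorem AlternatingMap.map_update_apply {R M N ι : Type*} [Semiring R] [AddCommMonoid M]
    [Module R M] [AddCommMonoid N] [Module R N] [DecidableEq ι] (φ : M [⋀^ι]→ₗ[R] N)
    (v : ι → M) (i j : ι) : φ (Function.update v i (v j)) = if i = j then φ v else 0 := by
  split_ifs with hij
  · rw [hij, Function.update_eq_self]
  · exact φ.map_eq_zero_of_eq _ (i := i) (j := j) (by simp [Function.update_apply]) hij

theorem stmt4_general {n m : ℕ}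
    (φ : (Fin n → ℝ) [⋀^Fin m]→ₗ[ℝ] ℝ)
    (v : Fin m → (Fin n → ℝ)) (hφv : φ v = 1) :
    ∃! W : Submodule ℝ (Fin n → ℝ),
      IsCompl (Submodule.span ℝ (Set.range v)) W ∧
        ∀ i : Fin m, ∀ w ∈ W, φ (Function.update v i w) = 0 := by
  have hbiorth : ∀ i j, φ.toMultilinearMap.toLinearMap v i (v j) = if i = j then 1 else 0 :=
    fun i j => by simpa [hφv] using φ.map_update_apply v i j
  simpa using existsUnique_isCompl_span_forall_eq_zero_of_biorthogonal hbiorth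

/-- Harvey–Lawson decomposition lemma: if `φ` is an alternating `m`-form on
`ℝ^n` and `v₁, …, v_m` are linearly independent with `φ(v₁,…,v_m) = 1`, then
there is a unique subspace `W` complementary to `V = span{v₁,…,v_m}` such that
`φ(v₁,…,v_{i-1}, w, v_{i+1},…,v_m) = 0` for every `i` and every `w ∈ W`. -/
theorem stmt4 {n m : ℕ} (hm : 1 ≤ m) (hmn : m ≤ n)
    (φ : (Fin n → ℝ) [⋀^Fin m]→ₗ[ℝ] ℝ)
    (v : Fin m → (Fin n → ℝ)) (hli : LinearIndependent ℝ v) (hφv : φ v = 1) :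
    ∃! W : Submodule ℝ (Fin n → ℝ),
      IsCompl (Submodule.span ℝ (Set.range v)) W ∧
        ∀ i : Fin m, ∀ w ∈ W, φ (Function.update v i w) = 0 :=
  stmt4_general φ v hφv
end

section
/- Equip ℝ^n with its standard inner product ⟨·,·⟩ and let v₁,…,v_n be an orthonormal basis of ℝ^n. Let 1 ≤ m ≤ n and let φ be an alternating m-form on ℝ^n that has comass at most 1 with respect to ⟨·,·⟩ and satisfies φ(v₁,…,v_m) = 1. Then for every i ∈ {1,…,m} and every j ∈ {m+1,…,n}, φ(v₁,…,v_{i−1}, v_j, v_{i+1},…,v_m) = 0. Consequently, the unique complementary subspace W to V = span{v₁,…,v_m} on which φ(v₁,…,v_{i−1}, w, v_{i+1},…,v_m) vanishes for all i and all w ∈ W is exactly span{v_{m+1},…,v_n}, the orthogonal complement of V. -/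
/-- The standard inner product on `ℝ^n`. -/
def stdInner {n : ℕ} (x y : Fin n → ℝ) : ℝ := ∑ i, x i * y i

/-- The Gram determinant of `v 0, …, v (m-1)` with respect to the standard
inner product on `ℝ^n`. -/
noncomputable def gramStd {n m : ℕ} (v : Fin m → (Fin n → ℝ)) : ℝ :=
  (Matrix.of fun i j => stdInner (v i) (v j)).det

/-!
If `a = φ(v₁, …, v_j, …, v_m) ≠ 0` (with `v_j` in slot `i`), tilting `v_i` to `v_i + a v_j`
raises the value of `φ` to `1 + a²` while the volume of the frame only grows to `√(1 + a²)`,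
contradicting comass `≤ 1`. So every `φ(v₁, …, ·, …, v_m)` vanishes on `span{v_j : j > m}`.
On `V = span{v₁, …, v_m}` these functionals read off the coordinates, so their joint kernel meets
`V` trivially; by the modular law, every complement of `V` inside that kernel is the kernel itself.
-/

open Function Matrix

lemma stdInner_eq_dotProduct {n : ℕ} (x y : Fin n → ℝ) : stdInner x y = x ⬝ᵥ y := rfl

lemma linearIndependent_of_stdInner_eq_ite {n : ℕ} {ι : Type*} [Fintype ι] [DecidableEq ι]
    {v : ι → Fin n → ℝ} (hv : ∀ i j, stdInner (v i) (v j) = if i = j then 1 else 0) :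
    LinearIndependent ℝ v := by
  rw [Fintype.linearIndependent_iff]
  intro c hc i
  have := congrArg (· ⬝ᵥ v i) hc
  simpa [sum_dotProduct, ← stdInner_eq_dotProduct, hv] using this

lemma det_one_add_vecMulVec_self {R m : Type*} [CommRing R] [Fintype m] [DecidableEq m]
    (s : m → R) :
    (1 + vecMulVec s s).det = 1 + s ⬝ᵥ s := by
  rw [vecMulVec_eq Unit, det_one_add_replicateCol_mul_replicateRow]

lemma gramStd_add_smul {n m : ℕ} (e : Fin m → Fin n → ℝ) (f : Fin n → ℝ) (s : Fin m → ℝ)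
    (he : ∀ k l, stdInner (e k) (e l) = if k = l then 1 else 0) (hf : stdInner f f = 1)
    (hef : ∀ k, stdInner (e k) f = 0) :
    gramStd (fun k => e k + s k • f) = 1 + s ⬝ᵥ s := by
  have hfe : ∀ k, stdInner f (e k) = 0 := fun k => by
    rw [stdInner_eq_dotProduct, dotProduct_comm]; exact hef k
  have hgram : (Matrix.of fun k l => stdInner (e k + s k • f) (e l + s l • f)) =
      1 + vecMulVec s s := by
    ext k l
    simp only [stdInner_eq_dotProduct, add_dotProduct, dotProduct_add, smul_dotProduct,
      dotProduct_smul] at *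
    simp [he, hf, hef, hfe, one_apply, vecMulVec_apply, mul_comm]
  rw [gramStd, hgram, det_one_add_vecMulVec_self]

lemma LinearIndependent.isCompl_span_castLE_span_le {K V : Type*} [Field K] [AddCommGroup V]
    [Module K V] [FiniteDimensional K V] {n m : ℕ} (hmn : m ≤ n) {v : Fin n → V}
    (hv : LinearIndependent K v) (hn : Module.finrank K V = n) :
    IsCompl (Submodule.span K (Set.range fun i : Fin m => v (Fin.castLE hmn i)))
      (Submodule.span K {x | ∃ j : Fin n, m ≤ (j : ℕ) ∧ x = v j}) := by
  set S : Set (Fin n) := {j | (j : ℕ) < m}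
  have hS : (Set.range fun i : Fin m => v (Fin.castLE hmn i)) = v '' S := by
    ext x
    constructor
    · rintro ⟨i, rfl⟩
      exact ⟨Fin.castLE hmn i, i.isLt, rfl⟩
    · rintro ⟨j, hj, rfl⟩
      exact ⟨⟨j, hj⟩, rfl⟩
  have hSc : {x | ∃ j : Fin n, m ≤ (j : ℕ) ∧ x = v j} = v '' Sᶜ := by
    ext x
    simp [S, eq_comm]
  rw [hS, hSc]
  exact hv.isCompl_span_image (hv.span_eq_top_of_card_eq_finrank' (by simp [hn])) isCompl_compl

namespace AlternatingMap

lemma map_update_eq_zero_of_comass_le_one {n m : ℕ}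
    (φ : (Fin n → ℝ) [⋀^Fin m]→ₗ[ℝ] ℝ) (hcomass : ∀ u, φ u ^ 2 ≤ gramStd u)
    {e : Fin m → Fin n → ℝ} (he : ∀ k l, stdInner (e k) (e l) = if k = l then 1 else 0)
    (hφe : φ e = 1) {f : Fin n → ℝ} (hf : stdInner f f = 1) (hef : ∀ k, stdInner (e k) f = 0)
    (i : Fin m) : φ (update e i f) = 0 := by
  set a := φ (update e i f)
  have hu : (fun k => e k + (Pi.single i a : Fin m → ℝ) k • f) = update e i (e i + a • f) := by
    funext k
    by_cases hk : k = i
    · subst hk; simp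
    · simp [hk]
  have hφu : φ (update e i (e i + a • f)) = 1 + a ^ 2 := by
    rw [φ.map_update_add, φ.map_update_smul, update_eq_self, hφe, smul_eq_mul]
    ring
  have hgram : gramStd (update e i (e i + a • f)) = 1 + a ^ 2 := by
    rw [← hu, gramStd_add_smul e f _ he hf hef]
    simp [sq]
  have := hcomass (update e i (e i + a • f))
  rw [hφu, hgram] at this
  nlinarith [sq_nonneg a]

lemma map_update_sum_smul_self {R M N ι : Type*} [CommSemiring R] [AddCommMonoid M]
    [Module R M] [AddCommMonoid N] [Module R N] [Fintype ι] [DecidableEq ι]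
    (φ : M [⋀^ι]→ₗ[R] N) (b : ι → M) (c : ι → R) (i : ι) :
    φ (update b i (∑ k, c k • b k)) = c i • φ b := by
  rw [φ.map_update_sum, Finset.sum_eq_single i]
  · rw [φ.map_update_smul, update_eq_self]
  · intro k _ hki
    rw [φ.map_update_smul, φ.map_eq_zero_of_eq _ (i := k) (j := i) (by simp [hki]) hki, smul_zero]
  · simp

variable {K M N ι : Type*} [Field K] [AddCommGroup M] [Module K M] [AddCommGroup N] [Module K N]
  [DecidableEq ι]

def kerUpdate (φ : M [⋀^ι]→ₗ[K] N) (b : ι → M) : Submodule K M :=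
  ⨅ i, LinearMap.ker (φ.toMultilinearMap.toLinearMap b i)

lemma mem_kerUpdate {φ : M [⋀^ι]→ₗ[K] N} {b : ι → M} {w : M} :
    w ∈ φ.kerUpdate b ↔ ∀ i, φ (update b i w) = 0 := by
  simp [kerUpdate, Submodule.mem_iInf]

lemma le_kerUpdate_iff {φ : M [⋀^ι]→ₗ[K] N} {b : ι → M} {W : Submodule K M} :
    W ≤ φ.kerUpdate b ↔ ∀ i, ∀ w ∈ W, φ (update b i w) = 0 :=
  ⟨fun h i _ hw => mem_kerUpdate.1 (h hw) i, fun h w hw => mem_kerUpdate.2 fun i => h i w hw⟩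

variable [Fintype ι]

lemma disjoint_span_kerUpdate {φ : M [⋀^ι]→ₗ[K] N} {b : ι → M} (hb : φ b ≠ 0) :
    Disjoint (Submodule.span K (Set.range b)) (φ.kerUpdate b) := by
  rw [Submodule.disjoint_def]
  intro p hp hpK
  obtain ⟨c, rfl⟩ := (Submodule.mem_span_range_iff_exists_fun K).1 hp
  have hc : ∀ i, c i = 0 := fun i => by
    simpa [φ.map_update_sum_smul_self, hb] using mem_kerUpdate.1 hpK i
  simp [hc]

lemma isCompl_span_and_le_kerUpdate_iff {φ : M [⋀^ι]→ₗ[K] N} {b : ι → M} (hb : φ b ≠ 0)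
    {U : Submodule K M} (hU : IsCompl (Submodule.span K (Set.range b)) U)
    (hUK : U ≤ φ.kerUpdate b) (W : Submodule K M) :
    IsCompl (Submodule.span K (Set.range b)) W ∧ W ≤ φ.kerUpdate b ↔ W = U := by
  have eq_kerUpdate {W : Submodule K M} (hW : IsCompl (Submodule.span K (Set.range b)) W)
      (hWK : W ≤ φ.kerUpdate b) : W = φ.kerUpdate b :=
    (le_iff_eq_of_codisjoint_of_disjoint hW.codisjoint.symm (disjoint_span_kerUpdate hb)).1 hWK
  constructor
  · rintro ⟨hW, hWK⟩
    rw [eq_kerUpdate hW hWK, eq_kerUpdate hU hUK]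
  · rintro rfl
    exact ⟨hU, hUK⟩

end AlternatingMap

theorem stmt6_general {n m : ℕ} (hmn : m ≤ n)
    (v : Fin n → (Fin n → ℝ))
    (hortho : ∀ i j : Fin n, stdInner (v i) (v j) = if i = j then 1 else 0)
    (φ : (Fin n → ℝ) [⋀^Fin m]→ₗ[ℝ] ℝ)
    (hcomass : ∀ u : Fin m → (Fin n → ℝ), (φ u) ^ 2 ≤ gramStd u)
    (hcal : φ (fun i : Fin m => v (Fin.castLE hmn i)) = 1) :
    (∀ i : Fin m, ∀ j : Fin n, m ≤ (j : ℕ) →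
        φ (Function.update (fun i : Fin m => v (Fin.castLE hmn i)) i (v j)) = 0) ∧
      ∀ W : Submodule ℝ (Fin n → ℝ),
        (IsCompl (Submodule.span ℝ (Set.range fun i : Fin m => v (Fin.castLE hmn i))) W ∧
            ∀ i : Fin m, ∀ w ∈ W,
              φ (Function.update (fun i : Fin m => v (Fin.castLE hmn i)) i w) = 0) ↔
          W = Submodule.span ℝ {x : Fin n → ℝ | ∃ j : Fin n, m ≤ (j : ℕ) ∧ x = v j} := by
  set b : Fin m → Fin n → ℝ := fun i => v (Fin.castLE hmn i)
  have hb : ∀ k l, stdInner (b k) (b l) = if k = l then 1 else 0 := by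
    simp [b, hortho, Fin.castLE_inj]
  have hvanish (i : Fin m) (j : Fin n) (hj : m ≤ (j : ℕ)) : φ (update b i (v j)) = 0 := by
    refine φ.map_update_eq_zero_of_comass_le_one hcomass hb hcal (by simp [hortho]) (fun k => ?_) i
    rw [hortho, if_neg (Fin.ne_of_val_ne (by rw [Fin.val_castLE]; omega))]
  refine ⟨hvanish, fun W => ?_⟩
  have hUK : Submodule.span ℝ {x | ∃ j : Fin n, m ≤ (j : ℕ) ∧ x = v j} ≤ φ.kerUpdate b := by
    rw [Submodule.span_le]
    rintro _ ⟨j, hj, rfl⟩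
    exact AlternatingMap.mem_kerUpdate.2 fun i => hvanish i j hj
  rw [← AlternatingMap.le_kerUpdate_iff]
  exact AlternatingMap.isCompl_span_and_le_kerUpdate_iff (by simp [b, hcal])
    ((linearIndependent_of_stdInner_eq_ite hortho).isCompl_span_castLE_span_le hmn (by simp)) hUK W

/-- Decomposition for a calibration form: let `v₁,…,v_n` be an orthonormal
basis of `ℝ^n` and `φ` an alternating `m`-form of comass at most `1` (for the
standard inner product) calibrating `span{v₁,…,v_m}`, i.e. `φ(v₁,…,v_m) = 1`.
Then `φ(v₁,…,v_{i-1}, v_j, v_{i+1},…,v_m) = 0` for all `1 ≤ i ≤ m < j ≤ n`,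
and the unique complement `W` of `V = span{v₁,…,v_m}` on which
`φ(v₁,…,v_{i-1},·,v_{i+1},…,v_m)` vanishes is exactly `span{v_{m+1},…,v_n}`. -/
theorem stmt6 {n m : ℕ} (hm : 1 ≤ m) (hmn : m ≤ n)
    (v : Fin n → (Fin n → ℝ))
    (hortho : ∀ i j : Fin n, stdInner (v i) (v j) = if i = j then 1 else 0)
    (φ : (Fin n → ℝ) [⋀^Fin m]→ₗ[ℝ] ℝ)
    (hcomass : ∀ u : Fin m → (Fin n → ℝ), (φ u) ^ 2 ≤ gramStd u)
    (hcal : φ (fun i : Fin m => v (Fin.castLE hmn i)) = 1) :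
    (∀ i : Fin m, ∀ j : Fin n, m ≤ (j : ℕ) →
        φ (Function.update (fun i : Fin m => v (Fin.castLE hmn i)) i (v j)) = 0) ∧
      ∀ W : Submodule ℝ (Fin n → ℝ),
        (IsCompl (Submodule.span ℝ (Set.range fun i : Fin m => v (Fin.castLE hmn i))) W ∧
            ∀ i : Fin m, ∀ w ∈ W,
              φ (Function.update (fun i : Fin m => v (Fin.castLE hmn i)) i w) = 0) ↔
          W = Submodule.span ℝ {x : Fin n → ℝ | ∃ j : Fin n, m ≤ (j : ℕ) ∧ x = v j} :=
  stmt6_general hmn v hortho φ hcomass hcal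
end

section
/- Let φ be a nonzero alternating m-form on ℝ^n (1 ≤ m ≤ n) and let g be an inner product on ℝ^n. Then sup{ φ(u₁,…,u_m) : u₁,…,u_m ∈ ℝ^n, Gram_g(u₁,…,u_m) = 1 } = ( inf{ √(Gram_g(u₁,…,u_m)) : u₁,…,u_m ∈ ℝ^n, φ(u₁,…,u_m) = 1 } )⁻¹; in particular the infimum on the right-hand side is strictly positive. -/
/-!
Transport `g` to the Euclidean inner product by a linear isomorphism `L` (`L x = √G x`, with `G`
the matrix of `g`), so that it suffices to work in a finite-dimensional inner product space.
There, Gram–Schmidt writes an independent tuple as `u = A • e` with `e` orthonormal, so that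
`φ u = det A · φ e` and `Gram u = (det A)²`; as `φ` is bounded on orthonormal tuples, the comass
`sup {φ u : Gram u = 1}` is finite. Rescaling `u₁` by `c` multiplies `φ u` by `c` and `Gram u`
by `c²`, which turns `{√Gram u : φ u = 1}` into the reciprocals of the positive values of
`{φ u : Gram u = 1}`.
-/

open scoped RealInnerProductSpace Matrix

theorem MultilinearMap.continuous_of_finiteDimensional {𝕜 ι E F : Type*}
    [NontriviallyNormedField 𝕜] [CompleteSpace 𝕜] [Fintype ι]
    [NormedAddCommGroup E] [NormedSpace 𝕜 E] [FiniteDimensional 𝕜 E]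
    [AddCommGroup F] [Module 𝕜 F] [TopologicalSpace F] [ContinuousAdd F] [ContinuousSMul 𝕜 F]
    (f : MultilinearMap 𝕜 (fun _ : ι => E) F) : Continuous f := by
  classical
  let b := Module.finBasis 𝕜 E
  have expand : ∀ v : ι → E,
      f v = ∑ r : ι → Fin _, (∏ i, b.equivFun (v i) (r i)) • f fun i => b (r i) := by
    intro v
    conv_lhs => rw [← funext fun i => b.sum_equivFun (v i)]
    rw [f.map_sum]
    simp_rw [f.map_smul_univ]
  have hcoord : Continuous b.equivFun := b.equivFun.toLinearMap.continuous_of_finiteDimensional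
  rw [funext expand]
  fun_prop

theorem AlternatingMap.map_sum_smul_eq_det_mul {R M ι : Type*} [CommRing R] [AddCommGroup M]
    [Module R M] [Fintype ι] [DecidableEq ι] (φ : M [⋀^ι]→ₗ[R] R) (A : Matrix ι ι R)
    (v : ι → M) : φ (fun i => ∑ j, A i j • v j) = A.det * φ v := by
  let ψ := φ.compLinearMap (Fintype.linearCombination R v)
  have hψ : ψ (Pi.basisFun R ι) = φ v := by
    simp [ψ, Fintype.linearCombination_apply_single]
  calc φ (fun i => ∑ j, A i j • v j) = ψ fun i => A i := by
        simp [ψ, Fintype.linearCombination_apply]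
    _ = A.det * φ v := by
        rw [ψ.eq_smul_basis_det (Pi.basisFun R ι), AlternatingMap.smul_apply, Pi.basisFun_det,
          hψ, smul_eq_mul, mul_comm]
        rfl

section InnerProductSpace

variable {E ι : Type*} [NormedAddCommGroup E] [InnerProductSpace ℝ E] [Fintype ι]

theorem Matrix.gram_sum_smul (A : Matrix ι ι ℝ) (v : ι → E) :
    Matrix.gram ℝ (fun i => ∑ j, A i j • v j) = A * Matrix.gram ℝ v * Aᵀ := by
  ext i j
  simp only [Matrix.gram_apply, sum_inner, inner_sum, real_inner_smul_left, real_inner_smul_right,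
    Matrix.mul_apply, Matrix.transpose_apply, Finset.sum_mul]
  exact Finset.sum_congr rfl fun _ _ => Finset.sum_congr rfl fun _ _ => by ring

theorem Matrix.det_gram_sum_smul [DecidableEq ι] (A : Matrix ι ι ℝ) (v : ι → E) :
    (Matrix.gram ℝ (fun i => ∑ j, A i j • v j)).det = A.det ^ 2 * (Matrix.gram ℝ v).det := by
  rw [Matrix.gram_sum_smul, Matrix.det_mul, Matrix.det_mul, Matrix.det_transpose]
  ring

theorem exists_orthonormal_sum_smul_eq [LinearOrder ι] [LocallyFiniteOrderBot ι]
    {u : ι → E} (hu : LinearIndependent ℝ u) :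
    ∃ (e : ι → E) (A : Matrix ι ι ℝ), Orthonormal ℝ e ∧ (fun i => ∑ j, A i j • e j) = u := by
  have hspan : ∀ i,
      u i ∈ Submodule.span ℝ (Set.range (InnerProductSpace.gramSchmidtNormed ℝ u)) := by
    intro i
    rw [InnerProductSpace.span_gramSchmidtNormed_range, InnerProductSpace.span_gramSchmidt]
    exact Submodule.subset_span ⟨i, rfl⟩
  choose A hA using fun i => (Submodule.mem_span_range_iff_exists_fun ℝ).mp (hspan i)
  exact ⟨_, A, InnerProductSpace.gramSchmidtNormed_orthonormal hu, funext hA⟩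

namespace AlternatingMap

theorem det_gram_pos_of_map_ne_zero [DecidableEq ι] (φ : E [⋀^ι]→ₗ[ℝ] ℝ) {u : ι → E}
    (hu : φ u ≠ 0) : 0 < (Matrix.gram ℝ u).det :=
  (Matrix.posDef_gram_of_linearIndependent (not_not.mp (mt (φ.map_linearDependent u) hu))).det_pos

theorem exists_map_eq_mul_and_det_gram_eq [DecidableEq ι] (φ : E [⋀^ι]→ₗ[ℝ] ℝ) (i : ι)
    (u : ι → E) (c : ℝ) :
    ∃ v, φ v = c * φ u ∧ (Matrix.gram ℝ v).det = c ^ 2 * (Matrix.gram ℝ u).det := by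
  set A := Matrix.diagonal (Function.update 1 i c)
  have hA : A.det = c := by
    rw [Matrix.det_diagonal, Finset.prod_update_of_mem (Finset.mem_univ i)]
    simp
  exact ⟨_, hA ▸ φ.map_sum_smul_eq_det_mul A u, hA ▸ Matrix.det_gram_sum_smul A u⟩

theorem exists_map_eq_one {φ : E [⋀^ι]→ₗ[ℝ] ℝ} [Nonempty ι] (hφ : φ ≠ 0) : ∃ u, φ u = 1 := by
  classical
  obtain ⟨u, hu⟩ : ∃ u, φ u ≠ 0 := by
    by_contra! h
    exact hφ (AlternatingMap.ext h)
  obtain ⟨v, hv, -⟩ := φ.exists_map_eq_mul_and_det_gram_eq (Classical.arbitrary ι) u (φ u)⁻¹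
  exact ⟨v, by rw [hv, inv_mul_cancel₀ hu]⟩

variable {m : ℕ}

theorem exists_abs_le_mul_sqrt_det_gram [FiniteDimensional ℝ E] (φ : E [⋀^Fin m]→ₗ[ℝ] ℝ) :
    ∃ C, ∀ u, |φ u| ≤ C * √(Matrix.gram ℝ u).det := by
  obtain ⟨C, hC, hbound⟩ :=
    φ.exists_bound_of_continuous φ.toMultilinearMap.continuous_of_finiteDimensional
  refine ⟨C, fun u => ?_⟩
  by_cases hu : LinearIndependent ℝ u
  · obtain ⟨e, A, he, rfl⟩ := exists_orthonormal_sum_smul_eq hu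
    have hφe : |φ e| ≤ C := by simpa [he.1] using hbound e
    rw [φ.map_sum_smul_eq_det_mul, Matrix.det_gram_sum_smul,
      Matrix.gram_eq_one_iff_orthonormal.mpr he, Matrix.det_one, mul_one, Real.sqrt_sq_eq_abs,
      abs_mul, mul_comm C]
    exact mul_le_mul_of_nonneg_left hφe (abs_nonneg _)
  · rw [φ.map_linearDependent u hu, abs_zero]
    positivity

end AlternatingMap

end InnerProductSpace

theorem Matrix.PosDef.exists_linearEquiv_euclideanSpace {n : Type*} [Fintype n] [DecidableEq n]
    {G : Matrix n n ℝ} (hG : G.PosDef) :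
    ∃ L : (n → ℝ) ≃ₗ[ℝ] EuclideanSpace ℝ n, ∀ x y, x ⬝ᵥ G *ᵥ y = ⟪L x, L y⟫ := by
  open scoped MatrixOrder in
  obtain ⟨P, hPG, hPt⟩ : ∃ P : Matrix n n ℝ, P * P = G ∧ Pᵀ = P :=
    ⟨CFC.sqrt G, CFC.sqrt_mul_sqrt_self G hG.posSemidef.nonneg,
      by simpa using (Matrix.nonneg_iff_posSemidef.mp (CFC.sqrt_nonneg G)).isHermitian.eq⟩
  let L₀ : (n → ℝ) →ₗ[ℝ] EuclideanSpace ℝ n :=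
    (WithLp.linearEquiv 2 ℝ (n → ℝ)).symm.toLinearMap ∘ₗ P.mulVecLin
  have hL₀ : ∀ x y, x ⬝ᵥ G *ᵥ y = ⟪L₀ x, L₀ y⟫ := by
    intro x y
    rw [← hPG, ← Matrix.mulVec_mulVec, Matrix.dotProduct_mulVec, ← Matrix.mulVec_transpose, hPt]
    simp [L₀, EuclideanSpace.inner_eq_star_dotProduct, dotProduct_comm]
  have hinj : Function.Injective L₀ := by
    refine (injective_iff_map_eq_zero L₀).mpr fun x hx => ?_
    by_contra hx0
    have := hG.dotProduct_mulVec_pos hx0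
    simp [hL₀, hx] at this
  exact ⟨.ofBijective L₀ ⟨hinj, (LinearMap.injective_iff_surjective_of_finrank_eq_finrank
    (by simp)).mp hinj⟩, hL₀⟩

theorem IsInnerProduct.exists_posDef {n : ℕ} {g : (Fin n → ℝ) → (Fin n → ℝ) → ℝ}
    (hg : IsInnerProduct g) :
    ∃ G : Matrix (Fin n) (Fin n) ℝ, G.PosDef ∧ ∀ x y, g x y = x ⬝ᵥ G *ᵥ y := by
  obtain ⟨hsym, hlin, hpos⟩ := hg
  let B : (Fin n → ℝ) →ₗ[ℝ] (Fin n → ℝ) →ₗ[ℝ] ℝ := LinearMap.mk₂ ℝ g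
    (fun x y z => by rw [hsym, (hlin z).map_add, hsym z, hsym z])
    (fun c x y => by rw [hsym, (hlin y).map_smul, hsym y])
    (fun x y z => (hlin x).map_add y z) (fun c x y => (hlin x).map_smul c y)
  have hB : ∀ x y, g x y = x ⬝ᵥ LinearMap.toMatrix₂' ℝ B *ᵥ y := fun x y => by
    rw [← Matrix.toLinearMap₂'_apply', Matrix.toLinearMap₂'_toMatrix']
    rfl
  refine ⟨_, .of_dotProduct_mulVec_pos ?_ fun x hx => ?_, hB⟩
  · ext i j
    exact hsym _ _
  · simpa [← hB] using hpos x hx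

theorem IsInnerProduct.exists_linearEquiv_euclideanSpace {n : ℕ}
    {g : (Fin n → ℝ) → (Fin n → ℝ) → ℝ} (hg : IsInnerProduct g) :
    ∃ L : (Fin n → ℝ) ≃ₗ[ℝ] EuclideanSpace ℝ (Fin n), ∀ x y, g x y = ⟪L x, L y⟫ := by
  obtain ⟨G, hG, hgG⟩ := hg.exists_posDef
  obtain ⟨L, hL⟩ := hG.exists_linearEquiv_euclideanSpace
  exact ⟨L, fun x y => (hgG x y).trans (hL x y)⟩

namespace AlternatingMap

variable {E : Type*} [NormedAddCommGroup E] [InnerProductSpace ℝ E] {m : ℕ}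

noncomputable def comass (φ : E [⋀^Fin m]→ₗ[ℝ] ℝ) : ℝ :=
  sSup {r | ∃ u, (Matrix.gram ℝ u).det = 1 ∧ φ u = r}

variable (φ : E [⋀^Fin m]→ₗ[ℝ] ℝ) [NeZero m]

theorem div_sqrt_det_gram_mem {u : Fin m → E} (hu : 0 < (Matrix.gram ℝ u).det) :
    φ u / √(Matrix.gram ℝ u).det ∈ {r | ∃ u, (Matrix.gram ℝ u).det = 1 ∧ φ u = r} := by
  obtain ⟨v, hφv, hv⟩ := φ.exists_map_eq_mul_and_det_gram_eq 0 u (√(Matrix.gram ℝ u).det)⁻¹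
  refine ⟨v, ?_, by rw [hφv, div_eq_inv_mul]⟩
  rw [hv, inv_pow, Real.sq_sqrt hu.le, inv_mul_cancel₀ hu.ne']

variable [FiniteDimensional ℝ E] {φ} (hφ : φ ≠ 0)
include hφ

theorem isLUB_comass : IsLUB {r | ∃ u, (Matrix.gram ℝ u).det = 1 ∧ φ u = r} φ.comass := by
  obtain ⟨u, hu⟩ := exists_map_eq_one hφ
  obtain ⟨C, hC⟩ := φ.exists_abs_le_mul_sqrt_det_gram
  have hdet := φ.det_gram_pos_of_map_ne_zero (ne_of_eq_of_ne hu one_ne_zero)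
  refine isLUB_csSup ⟨_, φ.div_sqrt_det_gram_mem hdet⟩ ⟨C, ?_⟩
  rintro _ ⟨v, hv, rfl⟩
  simpa [hv] using (le_abs_self _).trans (hC v)

theorem comass_pos : 0 < φ.comass := by
  obtain ⟨u, hu⟩ := exists_map_eq_one hφ
  have hdet := φ.det_gram_pos_of_map_ne_zero (ne_of_eq_of_ne hu one_ne_zero)
  calc 0 < φ u / √(Matrix.gram ℝ u).det := by rw [hu]; positivity
    _ ≤ φ.comass := (isLUB_comass hφ).1 (φ.div_sqrt_det_gram_mem hdet)

theorem isGLB_inv_comass :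
    IsGLB {r | ∃ u, φ u = 1 ∧ r = √(Matrix.gram ℝ u).det} φ.comass⁻¹ := by
  have hpos := comass_pos hφ
  refine ⟨?_, fun b hb => ?_⟩
  · rintro _ ⟨u, hu, rfl⟩
    have hdet := φ.det_gram_pos_of_map_ne_zero (ne_of_eq_of_ne hu one_ne_zero)
    have := (isLUB_comass hφ).1 (φ.div_sqrt_det_gram_mem hdet)
    rw [hu, one_div] at this
    exact (inv_le_comm₀ (Real.sqrt_pos.mpr hdet) hpos).mp this
  · by_contra! hb'
    have hb0 : 0 < b := (inv_pos.mpr hpos).trans hb'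
    obtain ⟨_, ⟨u, hu, rfl⟩, hlt⟩ :=
      (lt_isLUB_iff (isLUB_comass hφ)).mp ((inv_lt_comm₀ hpos hb0).mp hb')
    have hφu : 0 < φ u := (inv_pos.mpr hb0).trans hlt
    obtain ⟨v, hφv, hv⟩ := φ.exists_map_eq_mul_and_det_gram_eq 0 u (φ u)⁻¹
    have := hb ⟨v, by rw [hφv, inv_mul_cancel₀ hφu.ne'], rfl⟩
    rw [hv, hu, mul_one, inv_pow, Real.sqrt_inv, Real.sqrt_sq hφu.le] at this
    exact this.not_gt ((inv_lt_comm₀ hb0 hφu).mp hlt)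

theorem sInf_sqrt_det_gram_eq_inv_comass :
    sInf {r | ∃ u, φ u = 1 ∧ r = √(Matrix.gram ℝ u).det} = φ.comass⁻¹ := by
  obtain ⟨u, hu⟩ := exists_map_eq_one hφ
  exact (isGLB_inv_comass hφ).csInf_eq ⟨_, u, hu, rfl⟩

end AlternatingMap

theorem stmt8_general {n m : ℕ} (hm : 1 ≤ m)
    (φ : (Fin n → ℝ) [⋀^Fin m]→ₗ[ℝ] ℝ) (hφ : φ ≠ 0)
    (g : (Fin n → ℝ) → (Fin n → ℝ) → ℝ) (hg : IsInnerProduct g) :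
    0 < sInf {r : ℝ | ∃ u : Fin m → (Fin n → ℝ), φ u = 1 ∧ r = Real.sqrt (gram g u)} ∧
      sSup {r : ℝ | ∃ u : Fin m → (Fin n → ℝ), gram g u = 1 ∧ φ u = r} =
        (sInf {r : ℝ | ∃ u : Fin m → (Fin n → ℝ), φ u = 1 ∧ r = Real.sqrt (gram g u)})⁻¹ := by
  have : NeZero m := ⟨by omega⟩
  obtain ⟨L, hL⟩ := hg.exists_linearEquiv_euclideanSpace
  set ψ := φ.compLinearMap L.symm.toLinearMap
  have hφψ : ∀ u, φ u = ψ (L ∘ u) := fun u => by simp [ψ, Function.comp_def]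
  have hgram : ∀ u : Fin m → Fin n → ℝ, gram g u = (Matrix.gram ℝ (L ∘ u)).det := fun u => by
    simp only [gram, hL]; rfl
  have hsurj : Function.Surjective fun u : Fin m → Fin n → ℝ => L ∘ u :=
    fun v => ⟨L.symm ∘ v, by ext1; simp⟩
  have hψ : ψ ≠ 0 := fun h => hφ (AlternatingMap.ext fun u => by simp [hφψ, h])
  have hS : {r : ℝ | ∃ u : Fin m → (Fin n → ℝ), φ u = 1 ∧ r = Real.sqrt (gram g u)} =
      {r | ∃ v, ψ v = 1 ∧ r = √(Matrix.gram ℝ v).det} := by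
    ext r
    simp only [Set.mem_ofPred_eq, hsurj.exists, hφψ, hgram]
  have hT : {r : ℝ | ∃ u : Fin m → (Fin n → ℝ), gram g u = 1 ∧ φ u = r} =
      {r | ∃ v, (Matrix.gram ℝ v).det = 1 ∧ ψ v = r} := by
    ext r
    simp only [Set.mem_ofPred_eq, hsurj.exists, hφψ, hgram]
  rw [hS, hT, AlternatingMap.sInf_sqrt_det_gram_eq_inv_comass hψ, inv_inv]
  exact ⟨inv_pos.mpr (AlternatingMap.comass_pos hψ), rfl⟩

/-- Comass as a reciprocal: for a nonzero alternating `m`-form `φ` and an inner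
product `g` on `ℝ^n`, the infimum of the `g`-volumes `√Gram_g(u₁,…,u_m)` over
tuples with `φ(u₁,…,u_m) = 1` is strictly positive, and the comass
`sup{φ(u) : Gram_g(u) = 1}` equals its inverse. -/
theorem stmt8 {n m : ℕ} (hm : 1 ≤ m) (hmn : m ≤ n)
    (φ : (Fin n → ℝ) [⋀^Fin m]→ₗ[ℝ] ℝ) (hφ : φ ≠ 0)
    (g : (Fin n → ℝ) → (Fin n → ℝ) → ℝ) (hg : IsInnerProduct g) :
    0 < sInf {r : ℝ | ∃ u : Fin m → (Fin n → ℝ), φ u = 1 ∧ r = Real.sqrt (gram g u)} ∧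
      sSup {r : ℝ | ∃ u : Fin m → (Fin n → ℝ), gram g u = 1 ∧ φ u = r} =
        (sInf {r : ℝ | ∃ u : Fin m → (Fin n → ℝ), φ u = 1 ∧ r = Real.sqrt (gram g u)})⁻¹ :=
  stmt8_general hm φ hφ g hg
end

section
/- For every m ≥ 1, the function F : ℝ^m → ℝ defined by F(X₁,…,X_m) = (X₁·X₂·⋯·X_m)⁻¹ is strictly convex on the open positive orthant {X ∈ ℝ^m : Xᵢ > 0 for all i}. -/
/-!
On the positive orthant, `(∏ i, X i)⁻¹ = exp (∑ i, -log (X i))`. The exponent is a sum of strictly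
convex functions of distinct coordinates, hence strictly convex (two distinct points differ in some
coordinate, where the inequality is strict), and composing with the convex, strictly increasing
`exp` preserves strict convexity.
-/

open Real Set

theorem StrictConvexOn.sum_pi {ι 𝕜 β : Type*} {E : ι → Type*} [Fintype ι]
    [Semiring 𝕜] [PartialOrder 𝕜] [IsOrderedRing 𝕜] [∀ i, AddCommMonoid (E i)]
    [∀ i, Module 𝕜 (E i)] [AddCommMonoid β] [PartialOrder β] [IsOrderedCancelAddMonoid β]
    [Module 𝕜 β] {s : ∀ i, Set (E i)} {f : ∀ i, E i → β}
    (hf : ∀ i, StrictConvexOn 𝕜 (s i) (f i)) :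
    StrictConvexOn 𝕜 (univ.pi s) (fun X => ∑ i, f i (X i)) := by
  refine ⟨convex_pi fun i _ => (hf i).1, fun x hx y hy hxy a b ha hb hab => ?_⟩
  rw [mem_univ_pi] at hx hy
  obtain ⟨j, hj⟩ := Function.ne_iff.1 hxy
  simp only [Pi.add_apply, Pi.smul_apply, Finset.smul_sum, ← Finset.sum_add_distrib]
  refine Finset.sum_lt_sum (fun i _ => ?_) ⟨j, Finset.mem_univ j, ?_⟩
  · exact (hf i).convexOn.2 (hx i) (hy i) ha.le hb.le hab
  · exact (hf j).2 (hx j) (hy j) hj ha hb hab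

theorem StrictConvexOn.exp {E : Type*} [AddCommMonoid E] [SMul ℝ E] {s : Set E} {f : E → ℝ}
    (hf : StrictConvexOn ℝ s f) : StrictConvexOn ℝ s fun x => Real.exp (f x) :=
  ⟨hf.1, fun _ hx _ hy hxy _ _ ha hb hab =>
    (exp_lt_exp.2 (hf.2 hx hy hxy ha hb hab)).trans_le
      (convexOn_exp.2 (mem_univ _) (mem_univ _) ha.le hb.le hab)⟩

theorem inv_prod_eq_exp_sum_neg_log {ι : Type*} [Fintype ι] {X : ι → ℝ} (hX : ∀ i, 0 < X i) :
    (∏ i, X i)⁻¹ = Real.exp (∑ i, -log (X i)) := by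
  simp only [exp_sum, exp_neg, exp_log (hX _), Finset.prod_inv_distrib]

theorem stmt9_general (m : ℕ) :
    StrictConvexOn ℝ {X : Fin m → ℝ | ∀ i, 0 < X i}
      (fun X : Fin m → ℝ => (∏ i, X i)⁻¹) := by
  have horthant : {X : Fin m → ℝ | ∀ i, 0 < X i} = univ.pi fun _ => Ioi 0 := by
    ext X
    simp
  have hsum : StrictConvexOn ℝ (univ.pi fun _ => Ioi 0) fun X : Fin m → ℝ => ∑ i, -log (X i) :=
    StrictConvexOn.sum_pi fun _ => strictConcaveOn_log_Ioi.neg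
  rw [horthant]
  exact hsum.exp.congr fun X hX => (inv_prod_eq_exp_sum_neg_log (mem_univ_pi.1 hX)).symm

/-- The function `F(X₁,…,X_m) = (X₁⋯X_m)⁻¹` is strictly convex on the open
positive orthant of `ℝ^m`. -/
theorem stmt9 (m : ℕ) (hm : 1 ≤ m) :
    StrictConvexOn ℝ {X : Fin m → ℝ | ∀ i, 0 < X i}
      (fun X : Fin m → ℝ => (∏ i, X i)⁻¹) :=
  stmt9_general m
end

section
/- Let m ≥ 1 and let λ₁,…,λ_m be positive real numbers. Then for every s ∈ [0,1], (∏_{i=1}^m ((1−s) + s·λᵢ))⁻¹ ≤ (1−s) + s·(∏_{i=1}^m λᵢ)⁻¹; equivalently, ∏_{i=1}^m ((1−s) + s·λᵢ) ≥ ((1−s) + s·(∏_{i=1}^m λᵢ)⁻¹)⁻¹. Moreover, if s ∈ (0,1), then equality holds if and only if λᵢ = 1 for all i. -/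
/-!
Weighted AM–GM for two points, `x ^ s ≤ (1 - s) + s x`, applied factorwise gives
`(∏ λᵢ) ^ s ≤ ∏ ((1 - s) + s λᵢ)`, and applied to `x = (∏ λᵢ)⁻¹` gives
`((∏ λᵢ) ^ s)⁻¹ ≤ (1 - s) + s (∏ λᵢ)⁻¹`; chaining the two proves the inequality. For
`0 < s < 1` two-point AM–GM is strict unless `x = 1`, so a single `λⱼ ≠ 1` already makes the
first step strict.
-/

open Finset

namespace Real

theorem rpow_le_one_sub_add_mul {x s : ℝ} (hx : 0 ≤ x) (hs₀ : 0 ≤ s) (hs₁ : s ≤ 1) :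
    x ^ s ≤ 1 - s + s * x := by
  have h := rpow_one_add_le_one_add_mul_self (by linarith : -1 ≤ x - 1) hs₀ hs₁
  rw [add_sub_cancel] at h
  linarith

theorem rpow_lt_one_sub_add_mul {x s : ℝ} (hx : 0 ≤ x) (hx₁ : x ≠ 1) (hs₀ : 0 < s)
    (hs₁ : s < 1) : x ^ s < 1 - s + s * x := by
  have h := rpow_one_add_lt_one_add_mul_self (by linarith : -1 ≤ x - 1) (sub_ne_zero.2 hx₁)
    hs₀ hs₁
  rw [add_sub_cancel] at h
  linarith

theorem inv_rpow_le_one_sub_add_mul_inv {x s : ℝ} (hx : 0 ≤ x) (hs₀ : 0 ≤ s) (hs₁ : s ≤ 1) :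
    (x ^ s)⁻¹ ≤ 1 - s + s * x⁻¹ := by
  rw [← inv_rpow hx]
  exact rpow_le_one_sub_add_mul (inv_nonneg.2 hx) hs₀ hs₁

theorem one_sub_add_mul_pos {x s : ℝ} (hx : 0 < x) (hs₀ : 0 ≤ s) (hs₁ : s ≤ 1) :
    0 < 1 - s + s * x :=
  (rpow_pos_of_pos hx s).trans_le (rpow_le_one_sub_add_mul hx.le hs₀ hs₁)

section Product

variable {ι : Type*} (t : Finset ι) {lam : ι → ℝ} {s : ℝ}

theorem prod_rpow_le_prod_one_sub_add_mul (hlam : ∀ i ∈ t, 0 ≤ lam i) (hs₀ : 0 ≤ s)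
    (hs₁ : s ≤ 1) : (∏ i ∈ t, lam i) ^ s ≤ ∏ i ∈ t, (1 - s + s * lam i) := by
  rw [← finsetProd_rpow t lam hlam]
  exact prod_le_prod (fun i hi => rpow_nonneg (hlam i hi) s)
    fun i hi => rpow_le_one_sub_add_mul (hlam i hi) hs₀ hs₁

theorem prod_rpow_lt_prod_one_sub_add_mul (hlam : ∀ i ∈ t, 0 < lam i) {j : ι} (hj : j ∈ t)
    (hj₁ : lam j ≠ 1) (hs₀ : 0 < s) (hs₁ : s < 1) :
    (∏ i ∈ t, lam i) ^ s < ∏ i ∈ t, (1 - s + s * lam i) := by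
  rw [← finsetProd_rpow t lam fun i hi => (hlam i hi).le]
  exact prod_lt_prod (fun i hi => rpow_pos_of_pos (hlam i hi) s)
    (fun i hi => rpow_le_one_sub_add_mul (hlam i hi).le hs₀.le hs₁.le)
    ⟨j, hj, rpow_lt_one_sub_add_mul (hlam j hj).le hj₁ hs₀ hs₁⟩

theorem inv_prod_one_sub_add_mul_le (hlam : ∀ i ∈ t, 0 < lam i) (hs₀ : 0 ≤ s) (hs₁ : s ≤ 1) :
    (∏ i ∈ t, (1 - s + s * lam i))⁻¹ ≤ 1 - s + s * (∏ i ∈ t, lam i)⁻¹ :=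
  calc (∏ i ∈ t, (1 - s + s * lam i))⁻¹
      ≤ ((∏ i ∈ t, lam i) ^ s)⁻¹ := inv_anti₀ (rpow_pos_of_pos (prod_pos hlam) s)
        (prod_rpow_le_prod_one_sub_add_mul t (fun i hi => (hlam i hi).le) hs₀ hs₁)
    _ ≤ 1 - s + s * (∏ i ∈ t, lam i)⁻¹ :=
      inv_rpow_le_one_sub_add_mul_inv (prod_pos hlam).le hs₀ hs₁

theorem inv_prod_one_sub_add_mul_lt (hlam : ∀ i ∈ t, 0 < lam i) {j : ι} (hj : j ∈ t)
    (hj₁ : lam j ≠ 1) (hs₀ : 0 < s) (hs₁ : s < 1) :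
    (∏ i ∈ t, (1 - s + s * lam i))⁻¹ < 1 - s + s * (∏ i ∈ t, lam i)⁻¹ :=
  calc (∏ i ∈ t, (1 - s + s * lam i))⁻¹
      < ((∏ i ∈ t, lam i) ^ s)⁻¹ := inv_strictAnti₀ (rpow_pos_of_pos (prod_pos hlam) s)
        (prod_rpow_lt_prod_one_sub_add_mul t hlam hj hj₁ hs₀ hs₁)
    _ ≤ 1 - s + s * (∏ i ∈ t, lam i)⁻¹ :=
      inv_rpow_le_one_sub_add_mul_inv (prod_pos hlam).le hs₀.le hs₁.le

theorem inv_prod_one_sub_add_mul_eq_iff (hlam : ∀ i ∈ t, 0 < lam i) (hs₀ : 0 < s)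
    (hs₁ : s < 1) :
    (∏ i ∈ t, (1 - s + s * lam i))⁻¹ = 1 - s + s * (∏ i ∈ t, lam i)⁻¹ ↔ ∀ i ∈ t, lam i = 1 := by
  refine ⟨fun heq => ?_, fun h => ?_⟩
  · by_contra! ⟨j, hj, hj₁⟩
    exact (inv_prod_one_sub_add_mul_lt t hlam hj hj₁ hs₀ hs₁).ne heq
  · rw [prod_congr rfl h, prod_eq_one fun i hi => by rw [h i hi]; ring]
    simp

end Product

end Real

theorem stmt10_general (m : ℕ) (lam : Fin m → ℝ) (hlam : ∀ i, 0 < lam i) :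
    (∀ s ∈ Set.Icc (0 : ℝ) 1,
        (∏ i, ((1 - s) + s * lam i))⁻¹ ≤ (1 - s) + s * (∏ i, lam i)⁻¹) ∧
      (∀ s ∈ Set.Icc (0 : ℝ) 1,
        ((1 - s) + s * (∏ i, lam i)⁻¹)⁻¹ ≤ ∏ i, ((1 - s) + s * lam i)) ∧
      ∀ s ∈ Set.Ioo (0 : ℝ) 1,
        ((∏ i, ((1 - s) + s * lam i))⁻¹ = (1 - s) + s * (∏ i, lam i)⁻¹ ↔
          ∀ i, lam i = 1) := by
  have hlam' : ∀ i ∈ univ, 0 < lam i := fun i _ => hlam i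
  refine ⟨fun s hs => Real.inv_prod_one_sub_add_mul_le univ hlam' hs.1 hs.2, fun s hs => ?_,
    fun s hs => by simpa using Real.inv_prod_one_sub_add_mul_eq_iff univ hlam' hs.1 hs.2⟩
  have hprod : 0 < ∏ i, (1 - s + s * lam i) :=
    prod_pos fun i _ => Real.one_sub_add_mul_pos (hlam i) hs.1 hs.2
  simpa using inv_anti₀ (inv_pos.2 hprod) (Real.inv_prod_one_sub_add_mul_le univ hlam' hs.1 hs.2)

/-- For positive reals `λ₁,…,λ_m` and `s ∈ [0,1]`,
`(∏ ((1-s) + s·λᵢ))⁻¹ ≤ (1-s) + s·(∏ λᵢ)⁻¹`, equivalently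
`∏ ((1-s) + s·λᵢ) ≥ ((1-s) + s·(∏ λᵢ)⁻¹)⁻¹`; and for `s ∈ (0,1)` equality
holds if and only if all `λᵢ = 1`. -/
theorem stmt10 (m : ℕ) (hm : 1 ≤ m) (lam : Fin m → ℝ) (hlam : ∀ i, 0 < lam i) :
    (∀ s ∈ Set.Icc (0 : ℝ) 1,
        (∏ i, ((1 - s) + s * lam i))⁻¹ ≤ (1 - s) + s * (∏ i, lam i)⁻¹) ∧
      (∀ s ∈ Set.Icc (0 : ℝ) 1,
        ((1 - s) + s * (∏ i, lam i)⁻¹)⁻¹ ≤ ∏ i, ((1 - s) + s * lam i)) ∧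
      ∀ s ∈ Set.Ioo (0 : ℝ) 1,
        ((∏ i, ((1 - s) + s * lam i))⁻¹ = (1 - s) + s * (∏ i, lam i)⁻¹ ↔
          ∀ i, lam i = 1) :=
  stmt10_general m lam hlam
end
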